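/- arXiv:1702.07169 — 2 statements merged into one kernel-verified Lean document; each statement's English description precedes it below -/
import Mathlib

section
/- Let M be a continuous nonnegative martingale with M₀ = m almost surely, where 0 < m < k, and let σ be a stopping time such that (M_{t∧σ})_{t≥0} is uniformly integrable. Let α > 1. If P(M_σ > k) > 0, then E[|M_σ − k|] − |m − k| > E[|M_σ − αk|] − |m − αk|. -/
open MeasureTheory ProbabilityTheory Real Filter Set Topology

noncomputable section

/-!
As `m < k < αk`, `|m - αk| - |m - k| = αk - k`, so the mean of `M_σ` plays no role and the claim
is `E|M_σ - αk| - E|M_σ - k| < αk - k`. Pointwise `|x - αk| - |x - k| ≤ αk - k`, strictly when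
`x > k`, which happens with positive probability. The stopped process converges to `M_σ`, so its
uniform integrability makes `M_σ` integrable.
-/

lemma abs_sub_sub_abs_sub_lt {x a b : ℝ} (hab : a < b) (hx : a < x) :
    |x - b| - |x - a| < b - a := by
  rw [abs_of_pos (sub_pos.2 hx)]
  rcases le_total x b with hxb | hxb
  · rw [abs_of_nonpos (sub_nonpos.2 hxb)]; linarith
  · rw [abs_of_nonneg (sub_nonneg.2 hxb)]; linarith

theorem integral_abs_sub_sub_integral_abs_sub_lt {Ω : Type*} {mΩ : MeasurableSpace Ω}
    {μ : Measure Ω} [IsProbabilityMeasure μ] {f : Ω → ℝ} (hf : Integrable f μ) {a b : ℝ}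
    (hab : a < b) (hpos : 0 < μ {ω | a < f ω}) :
    (∫ ω, |f ω - b| ∂μ) - ∫ ω, |f ω - a| ∂μ < b - a := by
  have hb : Integrable (fun ω => |f ω - b|) μ := (hf.sub (integrable_const b)).abs
  have ha : Integrable (fun ω => |f ω - a|) μ := (hf.sub (integrable_const a)).abs
  have hba : Integrable (fun ω => |f ω - b| - |f ω - a|) μ := hb.sub ha
  have hgap_nonneg : ∀ ω, 0 ≤ (b - a) - (|f ω - b| - |f ω - a|) := fun ω => by
    have := abs_sub_abs_le_abs_sub (f ω - b) (f ω - a)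
    rw [sub_sub_sub_cancel_left, abs_sub_comm a b, abs_of_pos (sub_pos.2 hab)] at this
    exact sub_nonneg.2 this
  have hgap_pos : 0 < ∫ ω, (b - a) - (|f ω - b| - |f ω - a|) ∂μ := by
    rw [integral_pos_iff_support_of_nonneg_ae (ae_of_all _ hgap_nonneg)
      ((integrable_const _).sub hba)]
    refine hpos.trans_le (measure_mono fun ω hω => ?_)
    exact (sub_pos.2 (abs_sub_sub_abs_sub_lt hab hω)).ne'
  rw [integral_sub (integrable_const _) hba, integral_sub hb ha] at hgap_pos
  simpa using hgap_pos

theorem MeasureTheory.UniformIntegrable.comp {α ι κ : Type*} {mα : MeasurableSpace α}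
    {β : Type*} [NormedAddCommGroup β] {μ : Measure α} {p : ENNReal} {f : ι → α → β}
    (hf : UniformIntegrable f p μ) (g : κ → ι) :
    UniformIntegrable (f ∘ g) p μ := by
  obtain ⟨hmeas, hunif, C, hC⟩ := hf
  exact ⟨fun i => hmeas (g i), fun ε hε => (hunif hε).imp fun _ ⟨hδ, h⟩ => ⟨hδ, fun i => h (g i)⟩,
    C, fun i => hC (g i)⟩

theorem integrable_stopped_of_uniformIntegrable {Ω : Type*} {mΩ : MeasurableSpace Ω}
    {μ : Measure Ω} [IsFiniteMeasure μ] {M : ℝ → Ω → ℝ} {σ : Ω → ℝ}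
    (hUI : UniformIntegrable (fun t ω => M (min (max t 0) (σ ω)) ω) 1 μ) :
    Integrable (fun ω => M (σ ω) ω) μ := by
  have hUIℕ := hUI.comp ((↑) : ℕ → ℝ)
  refine hUIℕ.integrable_of_tendstoInMeasure (u := atTop)
    (tendstoInMeasure_of_tendsto_ae hUIℕ.1 (ae_of_all _ fun ω => ?_))
  refine tendsto_atTop_of_eventually_const (i₀ := ⌈σ ω⌉₊) fun n hn => ?_
  have hσn : σ ω ≤ n := (Nat.le_ceil _).trans (Nat.cast_le.2 hn)
  simp only [Function.comp_apply, max_eq_left (Nat.cast_nonneg n), min_eq_right hσn]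

theorem expected_localtime_strict_comparison_general
    {Ω : Type*} {mΩ : MeasurableSpace Ω} (P : Measure Ω) [IsProbabilityMeasure P]
    (M : ℝ → Ω → ℝ)
    (m k α : ℝ) (hm0 : 0 < m) (hmk : m < k) (hα : 1 < α)
    (σ : Ω → ℝ)
    (hUI : MeasureTheory.UniformIntegrable
      (fun t : ℝ => fun ω => M (min (max t 0) (σ ω)) ω) 1 P)
    (hpos : 0 < P {ω | k < M (σ ω) ω}) :
    (∫ ω, |M (σ ω) ω - α * k| ∂P) - |m - α * k| <
      (∫ ω, |M (σ ω) ω - k| ∂P) - |m - k| := by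
  have hk_lt_αk : k < α * k := lt_mul_left (hm0.trans hmk) hα
  have hlocal := integral_abs_sub_sub_integral_abs_sub_lt
    (integrable_stopped_of_uniformIntegrable hUI) hk_lt_αk hpos
  rw [abs_of_neg (sub_neg.2 hmk), abs_of_neg (sub_neg.2 (hmk.trans hk_lt_αk))]
  linarith

/-- For a continuous nonnegative martingale `M` started at
`m ∈ (0, k)`, a stopping time `σ` whose stopped process is uniformly
integrable, and `α > 1`: if `P(M_σ > k) > 0` then
`E[|M_σ - k|] - |m - k| > E[|M_σ - αk|] - |m - αk|`
(a strict comparison of the expected local times at `k` and `αk`). -/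
theorem expected_localtime_strict_comparison
    {Ω : Type*} {mΩ : MeasurableSpace Ω} (P : Measure Ω) [IsProbabilityMeasure P]
    (F : MeasureTheory.Filtration ℝ mΩ) (M : ℝ → Ω → ℝ)
    (hmart : MeasureTheory.Martingale M F P)
    (hcont : ∀ᵐ ω ∂P, Continuous fun t => M t ω)
    (hnonneg : ∀ t : ℝ, ∀ᵐ ω ∂P, 0 ≤ M t ω)
    (m k α : ℝ) (hm0 : 0 < m) (hmk : m < k) (hα : 1 < α)
    (hstart : ∀ᵐ ω ∂P, M 0 ω = m)
    (σ : Ω → ℝ) (hσ : MeasureTheory.IsStoppingTime F (fun ω => (σ ω : WithTop ℝ))) (hσ0 : ∀ ω, 0 ≤ σ ω)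
    (hUI : MeasureTheory.UniformIntegrable
      (fun t : ℝ => fun ω => M (min (max t 0) (σ ω)) ω) 1 P)
    (hpos : 0 < P {ω | k < M (σ ω) ω}) :
    (∫ ω, |M (σ ω) ω - α * k| ∂P) - |m - α * k| <
      (∫ ω, |M (σ ω) ω - k| ∂P) - |m - k| :=
  expected_localtime_strict_comparison_general (mΩ := mΩ) P M m k α hm0 hmk hα σ hUI hpos
end
end

section
/- Let (p*, q*) be an optimal primal solution and (ν*, η*) an optimal dual solution of the discrete linear programming pair (P^N, D^N), satisfying the complementary slackness conditions. Let τ̄ denote the randomized stopping time of the random walk Y determined by (p*, q*), and set η̃*_{j,t} = η*_{j,t} + F̄^N_{j,t}. Then for every (j,t) with p*_{j,t} > 0, η̃*_{j,t} = E^{(j,t)}[F̄^N_{Y_{τ̄}, τ̄} − ∑_{s=t}^{τ̄−1} ν*_{Y_s}], where E^{(j,t)} is expectation for the walk started at site j at time t. -/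
open Real Filter Set MeasureTheory
open scoped ENNReal

noncomputable section
open scoped Classical

/-- Discretized payoff on the grid: `F̄^N_{j,t} = (exp(βj/√N)(cosh(β/√N))^{-t} - k)₊`. -/
def FbarD (β k : ℝ) (N : ℕ) (j : ℤ) (t : ℕ) : ℝ :=
  max (Real.exp (β * j / Real.sqrt N) * Real.cosh (β / Real.sqrt N) ^ (-(t : ℤ)) - k) 0

/-- The discrete curve `K^N_j`: the unique real with
`exp(β x^N_j)(cosh(β/√N))^{-K^N_j} = k`, so `F̄^N_{j,t} > 0` iff `t < K^N_j`. -/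
def KN (β k : ℝ) (N : ℕ) (j : ℤ) : ℝ :=
  (β * j / Real.sqrt N - Real.log k) / Real.log (Real.cosh (β / Real.sqrt N))

/-- The stopped-mass variables `q` determined by the running-mass variables `p`:
`q_{j,t} = ½(p_{j-1,t-1} + p_{j+1,t-1}) - p_{j,t}` for `t ≥ 2`, with the initial
unit of mass split between `j*±1` at time `1`. -/
def qOf (jstar : ℤ) (p : ℤ → ℕ → ℝ) (j : ℤ) (t : ℕ) : ℝ :=
  if t = 0 then 0
  else if t = 1 then
    ((if j = jstar + 1 then (1 : ℝ) / 2 else 0) +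
      (if j = jstar - 1 then (1 : ℝ) / 2 else 0)) - p j 1
  else (p (j - 1) (t - 1) + p (j + 1) (t - 1)) / 2 - p j t

/-- The potential bound `U^N_j = √N(∑_i |x^N_i - x^N_j| μ^N({x^N_i}) - |x^N_{j*} - x^N_j|)`,
where `x^N_i = i/√N`. -/
def UN (N : ℕ) (jstar : ℤ) (μN : ℤ → ℝ) (j : ℤ) : ℝ :=
  Real.sqrt N * ((∑' i : ℤ, |(i : ℝ) / Real.sqrt N - (j : ℝ) / Real.sqrt N| * μN i) -
    |(jstar : ℝ) / Real.sqrt N - (j : ℝ) / Real.sqrt N|)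

/-- Feasibility for the discrete primal linear program `P^N` (with the grid
`{j₀, …, j_L}`, starting site `j*` and potential bounds `U`): `p` is a
summable nonnegative family, all stopped masses `q` are nonnegative, the
initial unit of mass is split between `(j*±1, 1)`, `p` vanishes outside the
interior of the grid, and the potential constraints hold. -/
def PrimalFeasible (j0 jL jstar : ℤ) (U : ℤ → ℝ) (p : ℤ → ℕ → ℝ) : Prop :=
  Summable (fun jt : ℤ × ℕ => p jt.1 jt.2) ∧
  (∀ j t, 0 ≤ p j t) ∧
  (∀ j t, 2 ≤ t → 0 ≤ qOf jstar p j t) ∧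
  p (jstar + 1) 1 ≤ 1 / 2 ∧ p (jstar - 1) 1 ≤ 1 / 2 ∧
  (∀ j, j ≠ jstar + 1 → j ≠ jstar - 1 → p j 1 = 0) ∧
  (∀ j, p j 0 = 0) ∧
  (∀ j t, j ≤ j0 ∨ jL ≤ j → p j t = 0) ∧
  (∀ j, j0 < j → j < jL → (if j = jstar then (1 : ℝ) else 0) + ∑' t, p j t ≤ U j)

/-- The objective of the primal LP: `∑_{j,t} F̄^N_{j,t} q_{j,t}`. -/
def PrimalObj (β k : ℝ) (N : ℕ) (jstar : ℤ) (p : ℤ → ℕ → ℝ) : ℝ :=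
  ∑' jt : ℤ × ℕ, FbarD β k N jt.1 jt.2 * qOf jstar p jt.1 jt.2

/-- Feasibility for the discrete dual linear program `D^N`: nonnegative bounded
multipliers `(ν, η)` satisfying the superhedging constraint
`½(η_{j+1,t+1} + η_{j-1,t+1}) - η_{j,t} - ν_j ≤ F̄^N_{j,t} - ½(F̄^N_{j+1,t+1} + F̄^N_{j-1,t+1})`. -/
def DualFeasible (β k : ℝ) (N : ℕ) (ν : ℤ → ℝ) (η : ℤ → ℕ → ℝ) : Prop :=
  (∀ j, 0 ≤ ν j) ∧ (∀ j t, 0 ≤ η j t) ∧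
  (∃ C : ℝ, ∀ j t, η j t ≤ C) ∧ (∃ C : ℝ, ∀ j, ν j ≤ C) ∧
  (∀ (j : ℤ) (t : ℕ),
    (η (j + 1) (t + 1) + η (j - 1) (t + 1)) / 2 - η j t - ν j ≤
      FbarD β k N j t - (FbarD β k N (j + 1) (t + 1) + FbarD β k N (j - 1) (t + 1)) / 2)

/-- The complementary slackness conditions for the primal-dual pair `(P^N, D^N)`. -/
def ComplementarySlack (β k : ℝ) (N : ℕ) (j0 jL jstar : ℤ) (U : ℤ → ℝ)
    (p : ℤ → ℕ → ℝ) (ν : ℤ → ℝ) (η : ℤ → ℕ → ℝ) : Prop :=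
  (∀ (j : ℤ) (t : ℕ), 0 < p j t →
    (η (j + 1) (t + 1) + η (j - 1) (t + 1)) / 2 - η j t - ν j =
      FbarD β k N j t - (FbarD β k N (j + 1) (t + 1) + FbarD β k N (j - 1) (t + 1)) / 2) ∧
  (∀ (j : ℤ) (t : ℕ), 0 < qOf jstar p j t → η j t = 0) ∧
  (∀ j : ℤ, j0 < j → j < jL → 0 < ν j →
    (if j = jstar then (1 : ℝ) else 0) + ∑' t, p j t = U j)


open Topology

/-!
Write `η̃ = η + F̄`. Before `τ̄` the walk only visits sites with `p > 0`: by induction on time,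
a site reached from the support of `p` has `p + q > 0`, and one with `p = 0` is left only by
stopping. At such sites complementary slackness makes the dual constraint an equality,
`½(η̃_{i+1,s+1} + η̃_{i-1,s+1}) - η̃_{i,s} = ν_i`, so the expected value of `η̃` at the walk
minus the `ν` accumulated since `t` does not change from one step to the next. The walk stops
only where `q > 0`, where `η = 0`, so the stopped value is `F̄`. Every visited site is at most
`j_L`, so `η̃` is bounded along the path and the accumulated `ν` is at most `C τ̄`; since `τ̄` is
integrable, dominated convergence passes from the walk stopped at `min n τ̄` to the walk stopped
at `τ̄`.
-/

section CountableValued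

variable {Ω α : Type*} {mΩ : MeasurableSpace Ω} {μ : Measure Ω} [Countable α]

theorem ae_imp_iff_forall_measure_eq_zero {E : Ω → Prop} {X : Ω → α} {Q : α → Prop} :
    (∀ᵐ ω ∂μ, E ω → Q (X ω)) ↔ ∀ i, ¬ Q i → μ {ω | E ω ∧ X ω = i} = 0 := by
  have hbad : {ω | ¬ (E ω → Q (X ω))} = ⋃ i, ⋃ (_ : ¬ Q i), {ω | E ω ∧ X ω = i} := by
    ext ω
    simp only [mem_ofPred_eq, mem_iUnion, exists_prop, Classical.not_imp]
    exact ⟨fun h => ⟨X ω, h.2, h.1, rfl⟩, by rintro ⟨_, hQ, hE, rfl⟩; exact ⟨hE, hQ⟩⟩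
  simp only [ae_iff, hbad, measure_iUnion_null_iff]

theorem measurable_apply_of_measurable_index [MeasurableSpace α] [MeasurableSingletonClass α]
    {β : Type*} [MeasurableSpace β] {Z : α → Ω → β} (hZ : ∀ n, Measurable (Z n)) {σ : Ω → α}
    (hσ : Measurable σ) : Measurable fun ω => Z (σ ω) ω :=
  (measurable_from_prod_countable_left (f := fun z : Ω × α => Z z.2 z.1) hZ).comp
    (measurable_id.prodMk hσ)

end CountableValued

section SimpleRandomWalk

variable {Ω : Type*} {mΩ : MeasurableSpace Ω} {P : Measure Ω} [IsFiniteMeasure P]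
  {Y : ℕ → Ω → ℤ} {τ : Ω → ℕ} {t s : ℕ}

theorem measurableSet_lt_and_eq (hY : ∀ n, Measurable (Y n)) (hτ : Measurable τ) (s : ℕ)
    (i : ℤ) : MeasurableSet {ω | s < τ ω ∧ Y s ω = i} :=
  (hτ measurableSet_Ioi).inter (hY s (measurableSet_singleton i))

theorem measurableSet_lt_and_eq_and_eq (hY : ∀ n, Measurable (Y n)) (hτ : Measurable τ) (s : ℕ)
    (i i' : ℤ) : MeasurableSet {ω | s < τ ω ∧ Y s ω = i ∧ Y (s + 1) ω = i'} :=
  (hτ measurableSet_Ioi).inter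
    ((hY s (measurableSet_singleton i)).inter (hY (s + 1) (measurableSet_singleton i')))

/-- Only the law of each step given the current site is prescribed, not its independence
from the past. -/
def IsStoppedSimpleRandomWalk (P : Measure Ω) (Y : ℕ → Ω → ℤ) (τ : Ω → ℕ) (t : ℕ) : Prop :=
  ∀ s : ℕ, t ≤ s → ∀ i : ℤ,
    P {ω | s < τ ω ∧ Y s ω = i ∧ Y (s + 1) ω = i + 1} = P {ω | s < τ ω ∧ Y s ω = i} / 2 ∧
    P {ω | s < τ ω ∧ Y s ω = i ∧ Y (s + 1) ω = i - 1} = P {ω | s < τ ω ∧ Y s ω = i} / 2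

namespace IsStoppedSimpleRandomWalk

theorem restrict_eq_add (hW : IsStoppedSimpleRandomWalk P Y τ t) (hY : ∀ n, Measurable (Y n))
    (hτ : Measurable τ) (hs : t ≤ s) (i : ℤ) :
    P.restrict {ω | s < τ ω ∧ Y s ω = i} =
      P.restrict {ω | s < τ ω ∧ Y s ω = i ∧ Y (s + 1) ω = i + 1} +
        P.restrict {ω | s < τ ω ∧ Y s ω = i ∧ Y (s + 1) ω = i - 1} := by
  have hdisj : Disjoint {ω | s < τ ω ∧ Y s ω = i ∧ Y (s + 1) ω = i + 1}
      {ω | s < τ ω ∧ Y s ω = i ∧ Y (s + 1) ω = i - 1} := by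
    rw [Set.disjoint_left]
    rintro ω ⟨-, -, h⟩ ⟨-, -, h'⟩
    omega
  have hsub : {ω | s < τ ω ∧ Y s ω = i ∧ Y (s + 1) ω = i + 1} ∪
      {ω | s < τ ω ∧ Y s ω = i ∧ Y (s + 1) ω = i - 1} ⊆ {ω | s < τ ω ∧ Y s ω = i} := by
    rintro ω (⟨h1, h2, -⟩ | ⟨h1, h2, -⟩) <;> exact ⟨h1, h2⟩
  have hU := measurableSet_lt_and_eq_and_eq hY hτ s i (i + 1)
  have hV := measurableSet_lt_and_eq_and_eq hY hτ s i (i - 1)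
  rw [← Measure.restrict_union hdisj hV]
  refine Measure.restrict_congr_set
    (ae_eq_set.2 ⟨?_, by rw [sdiff_eq_empty.2 hsub, measure_empty]⟩)
  rw [measure_sdiff hsub (hU.union hV).nullMeasurableSet (measure_ne_top P _),
    measure_union hdisj hV, (hW s hs i).1, (hW s hs i).2, ENNReal.add_halves, tsub_self]

theorem ae_step (hW : IsStoppedSimpleRandomWalk P Y τ t) (hY : ∀ n, Measurable (Y n))
    (hτ : Measurable τ) (hs : t ≤ s) :
    ∀ᵐ ω ∂P, s < τ ω → Y (s + 1) ω = Y s ω + 1 ∨ Y (s + 1) ω = Y s ω - 1 := by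
  have hcover : {ω | s < τ ω} = ⋃ i, {ω | s < τ ω ∧ Y s ω = i} := by
    ext ω
    simp
  refine (ae_restrict_iff' (s := {ω | s < τ ω}) (hτ measurableSet_Ioi)).1 ?_
  rw [hcover, ae_restrict_iUnion_iff]
  intro i
  rw [hW.restrict_eq_add hY hτ hs i, ae_add_measure_iff]
  constructor
  · refine ae_restrict_of_forall_mem (measurableSet_lt_and_eq_and_eq hY hτ s i (i + 1)) ?_
    rintro ω ⟨-, hi, hstep⟩
    exact Or.inl (by rw [hstep, hi])
  · refine ae_restrict_of_forall_mem (measurableSet_lt_and_eq_and_eq hY hτ s i (i - 1)) ?_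
    rintro ω ⟨-, hi, hstep⟩
    exact Or.inr (by rw [hstep, hi])

theorem setIntegral_step (hW : IsStoppedSimpleRandomWalk P Y τ t) (hY : ∀ n, Measurable (Y n))
    (hτ : Measurable τ) (hs : t ≤ s) (i : ℤ) (h : ℤ → ℤ → ℝ) :
    ∫ ω in {ω | s < τ ω ∧ Y s ω = i}, h (Y s ω) (Y (s + 1) ω) ∂P =
      P.real {ω | s < τ ω ∧ Y s ω = i} * ((h i (i + 1) + h i (i - 1)) / 2) := by
  have hU := measurableSet_lt_and_eq_and_eq hY hτ s i (i + 1)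
  have hV := measurableSet_lt_and_eq_and_eq hY hτ s i (i - 1)
  have hUconst : ∀ ω ∈ {ω | s < τ ω ∧ Y s ω = i ∧ Y (s + 1) ω = i + 1},
      h (Y s ω) (Y (s + 1) ω) = h i (i + 1) := by
    rintro ω ⟨-, hi, hstep⟩
    rw [hi, hstep]
  have hVconst : ∀ ω ∈ {ω | s < τ ω ∧ Y s ω = i ∧ Y (s + 1) ω = i - 1},
      h (Y s ω) (Y (s + 1) ω) = h i (i - 1) := by
    rintro ω ⟨-, hi, hstep⟩
    rw [hi, hstep]
  have hUint : IntegrableOn (fun ω => h (Y s ω) (Y (s + 1) ω))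
      {ω | s < τ ω ∧ Y s ω = i ∧ Y (s + 1) ω = i + 1} P :=
    (integrableOn_const (measure_ne_top P _)).congr_fun (fun ω hω => (hUconst ω hω).symm) hU
  have hVint : IntegrableOn (fun ω => h (Y s ω) (Y (s + 1) ω))
      {ω | s < τ ω ∧ Y s ω = i ∧ Y (s + 1) ω = i - 1} P :=
    (integrableOn_const (measure_ne_top P _)).congr_fun (fun ω hω => (hVconst ω hω).symm) hV
  rw [hW.restrict_eq_add hY hτ hs i, integral_add_measure hUint hVint,
    setIntegral_congr_fun hU hUconst, setIntegral_congr_fun hV hVconst, setIntegral_const,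
    setIntegral_const, measureReal_def, measureReal_def, measureReal_def, (hW s hs i).1,
    (hW s hs i).2, ENNReal.toReal_div, smul_eq_mul, smul_eq_mul]
  norm_num
  ring

end IsStoppedSimpleRandomWalk

end SimpleRandomWalk

section OptionalStopping

variable {Ω : Type*} {mΩ : MeasurableSpace Ω} {P : Measure Ω} [IsFiniteMeasure P]
  {Y : ℕ → Ω → ℤ} {τ : Ω → ℕ} {t : ℕ} {V : ℤ → ℕ → ℝ} {c : ℤ → ℝ}

def walkGain (Y : ℕ → Ω → ℤ) (t : ℕ) (V : ℤ → ℕ → ℝ) (c : ℤ → ℝ) (m : ℕ) (ω : Ω) : ℝ :=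
  V (Y m ω) m - ∑ s ∈ Finset.Ico t m, c (Y s ω)

theorem measurable_walkGain (hY : ∀ n, Measurable (Y n)) (m : ℕ) :
    Measurable (walkGain Y t V c m) :=
  ((measurable_of_countable fun i => V i m).comp (hY m)).sub
    (Finset.measurable_sum _ fun s _ => (measurable_of_countable c).comp (hY s))

theorem walkGain_succ {m : ℕ} (hm : t ≤ m) (ω : Ω) :
    walkGain Y t V c (m + 1) ω =
      walkGain Y t V c m ω + (V (Y (m + 1) ω) (m + 1) - V (Y m ω) m - c (Y m ω)) := by
  simp only [walkGain, Finset.sum_Ico_succ_top hm]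
  ring

theorem abs_walkGain_le {m : ℕ} {ω : Ω} {CV Cc : ℝ} (hV : |V (Y m ω) m| ≤ CV)
    (hc : ∀ i, |c i| ≤ Cc) : |walkGain Y t V c m ω| ≤ CV + Cc * m := by
  have hCc : 0 ≤ Cc := (abs_nonneg _).trans (hc 0)
  have hsum : |∑ s ∈ Finset.Ico t m, c (Y s ω)| ≤ Cc * m :=
    calc |∑ s ∈ Finset.Ico t m, c (Y s ω)| ≤ ∑ s ∈ Finset.Ico t m, |c (Y s ω)| :=
          Finset.abs_sum_le_sum_abs _ _
      _ ≤ (Finset.Ico t m).card • Cc := Finset.sum_le_card_nsmul _ _ _ fun s _ => hc _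
      _ ≤ Cc * m := by
          rw [Nat.card_Ico, nsmul_eq_mul, mul_comm]
          gcongr
          exact_mod_cast Nat.sub_le m t
  exact (abs_sub _ _).trans (add_le_add hV hsum)

theorem integral_walkGain_min_succ (hW : IsStoppedSimpleRandomWalk P Y τ t)
    (hY : ∀ n, Measurable (Y n)) (hτ : Measurable τ) {n : ℕ} (hn : t ≤ n)
    (hharm : ∀ᵐ ω ∂P, n < τ ω →
      (V (Y n ω + 1) (n + 1) + V (Y n ω - 1) (n + 1)) / 2 - V (Y n ω) n = c (Y n ω))
    (hint : Integrable (fun ω => walkGain Y t V c (min n (τ ω)) ω) P)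
    (hint' : Integrable (fun ω => walkGain Y t V c (min (n + 1) (τ ω)) ω) P) :
    ∫ ω, walkGain Y t V c (min (n + 1) (τ ω)) ω ∂P =
      ∫ ω, walkGain Y t V c (min n (τ ω)) ω ∂P := by
  set g : ℤ → ℤ → ℝ := fun a b => V b (n + 1) - V a n - c a
  have hlt : MeasurableSet {ω | n < τ ω} := hτ measurableSet_Ioi
  have hdiff : (fun ω => walkGain Y t V c (min (n + 1) (τ ω)) ω -
      walkGain Y t V c (min n (τ ω)) ω) =
      {ω | n < τ ω}.indicator fun ω => g (Y n ω) (Y (n + 1) ω) := by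
    funext ω
    by_cases hω : n < τ ω
    · rw [indicator_of_mem (s := {ω | n < τ ω}) hω, min_eq_left hω, min_eq_left (by omega),
        walkGain_succ hn]
      ring
    · rw [indicator_of_notMem (s := {ω | n < τ ω}) hω, min_eq_right (by omega),
        min_eq_right (by omega), sub_self]
  have hgint : IntegrableOn (fun ω => g (Y n ω) (Y (n + 1) ω)) {ω | n < τ ω} P :=
    (integrable_indicator_iff hlt).1 (hdiff ▸ hint'.sub hint)
  have hpiece : ∀ i, ∫ ω in {ω | n < τ ω ∧ Y n ω = i}, g (Y n ω) (Y (n + 1) ω) ∂P = 0 := by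
    intro i
    rw [hW.setIntegral_step hY hτ hn i g]
    by_cases hi : (V (i + 1) (n + 1) + V (i - 1) (n + 1)) / 2 - V i n = c i
    · refine mul_eq_zero_of_right _ ?_
      simp only [g]
      linarith
    · refine mul_eq_zero_of_left ?_ _
      rw [measureReal_def, ENNReal.toReal_eq_zero_iff]
      exact Or.inl ((ae_imp_iff_forall_measure_eq_zero (X := Y n)
        (Q := fun i => (V (i + 1) (n + 1) + V (i - 1) (n + 1)) / 2 - V i n = c i)).1 hharm i hi)
  have hcover : {ω | n < τ ω} = ⋃ i, {ω | n < τ ω ∧ Y n ω = i} := by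
    ext ω
    simp
  have hdisj : Pairwise fun i i' : ℤ =>
      Disjoint {ω | n < τ ω ∧ Y n ω = i} {ω | n < τ ω ∧ Y n ω = i'} := by
    intro i i' hii'
    rw [Set.disjoint_left]
    rintro ω ⟨-, rfl⟩ ⟨-, h⟩
    exact hii' h
  have hzero : ∫ ω, (walkGain Y t V c (min (n + 1) (τ ω)) ω -
      walkGain Y t V c (min n (τ ω)) ω) ∂P = 0 := by
    rw [hdiff, integral_indicator hlt, hcover,
      integral_iUnion (measurableSet_lt_and_eq hY hτ n) hdisj (hcover ▸ hgint)]
    simp [hpiece]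
  rw [integral_sub hint' hint] at hzero
  linarith

theorem integral_walkGain_stop (hW : IsStoppedSimpleRandomWalk P Y τ t)
    (hY : ∀ n, Measurable (Y n)) (hτ : Measurable τ) (hτt : ∀ᵐ ω ∂P, t ≤ τ ω)
    (hτint : Integrable (fun ω => (τ ω : ℝ)) P)
    (hharm : ∀ n, t ≤ n → ∀ᵐ ω ∂P, n < τ ω →
      (V (Y n ω + 1) (n + 1) + V (Y n ω - 1) (n + 1)) / 2 - V (Y n ω) n = c (Y n ω))
    {CV Cc : ℝ} (hV : ∀ᵐ ω ∂P, ∀ n, t ≤ n → n ≤ τ ω → |V (Y n ω) n| ≤ CV)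
    (hc : ∀ i, |c i| ≤ Cc) :
    ∫ ω, walkGain Y t V c (τ ω) ω ∂P = ∫ ω, V (Y t ω) t ∂P := by
  set S : ℕ → Ω → ℝ := fun n ω => walkGain Y t V c (min n (τ ω)) ω
  have hCc : 0 ≤ Cc := (abs_nonneg _).trans (hc 0)
  have hbound : ∀ n, t ≤ n → ∀ᵐ ω ∂P, ‖S n ω‖ ≤ CV + Cc * τ ω := by
    intro n hn
    filter_upwards [hV, hτt] with ω hVω hτω
    refine (abs_walkGain_le (hVω _ (le_min hn hτω) (min_le_right _ _)) hc).trans ?_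
    gcongr
    exact min_le_right _ _
  have hdom : Integrable (fun ω => CV + Cc * τ ω) P :=
    (integrable_const CV).add (hτint.const_mul Cc)
  have hSmeas : ∀ n, Measurable (S n) := fun n =>
    measurable_apply_of_measurable_index (measurable_walkGain hY) (measurable_const.min hτ)
  have hSint : ∀ n, t ≤ n → Integrable (S n) P := fun n hn =>
    hdom.mono' (hSmeas n).aestronglyMeasurable (hbound n hn)
  have hconst : ∀ n, t ≤ n → ∫ ω, S n ω ∂P = ∫ ω, S t ω ∂P := by
    intro n hn
    induction n, hn using Nat.le_induction with
    | base => rfl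
    | succ n hn ih =>
      rw [← ih]
      exact integral_walkGain_min_succ hW hY hτ hn (hharm n hn) (hSint n hn)
        (hSint (n + 1) (by omega))
  have hSt : ∫ ω, S t ω ∂P = ∫ ω, V (Y t ω) t ∂P := by
    refine integral_congr_ae ?_
    filter_upwards [hτt] with ω hτω
    simp [S, walkGain, min_eq_left hτω]
  have hlim : Tendsto (fun n => ∫ ω, S n ω ∂P) atTop
      (𝓝 (∫ ω, walkGain Y t V c (τ ω) ω ∂P)) := by
    refine tendsto_integral_filter_of_dominated_convergence _
      (Eventually.of_forall fun n => (hSmeas n).aestronglyMeasurable)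
      (eventually_atTop.2 ⟨t, hbound⟩) hdom (Eventually.of_forall fun ω => ?_)
    refine tendsto_const_nhds.congr' (eventually_atTop.2 ⟨τ ω, fun n hn => ?_⟩)
    simp [S, min_eq_right hn]
  rw [← hSt]
  exact tendsto_nhds_unique hlim
    (tendsto_const_nhds.congr' (eventually_atTop.2 ⟨t, fun n hn => (hconst n hn).symm⟩))

end OptionalStopping

theorem FbarD_nonneg (β k : ℝ) (N : ℕ) (i : ℤ) (s : ℕ) : 0 ≤ FbarD β k N i s :=
  le_max_right _ _

theorem FbarD_le_exp {β k : ℝ} (hβ : 0 ≤ β) (hk : 0 ≤ k) (N : ℕ) {i l : ℤ} (hil : i ≤ l)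
    (s : ℕ) : FbarD β k N i s ≤ Real.exp (β * l / Real.sqrt N) := by
  have hcosh : Real.cosh (β / Real.sqrt N) ^ (-(s : ℤ)) ≤ 1 :=
    zpow_le_one_of_nonpos₀ (Real.one_le_cosh _) (by omega)
  have hexp : Real.exp (β * i / Real.sqrt N) ≤ Real.exp (β * l / Real.sqrt N) := by
    gcongr
  refine max_le ?_ (Real.exp_pos _).le
  nlinarith [Real.exp_pos (β * i / Real.sqrt N)]

theorem add_qOf_succ (jstar : ℤ) (p : ℤ → ℕ → ℝ) (i : ℤ) {n : ℕ} (hn : n ≠ 0) :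
    p i (n + 1) + qOf jstar p i (n + 1) = (p (i - 1) n + p (i + 1) n) / 2 := by
  simp only [qOf, Nat.add_sub_cancel, if_neg (Nat.succ_ne_zero n),
    if_neg (by omega : n + 1 ≠ 1)]
  ring

namespace PrimalFeasible

variable {j0 jL jstar : ℤ} {U : ℤ → ℝ} {p : ℤ → ℕ → ℝ}

theorem lt_of_pos (hp : PrimalFeasible j0 jL jstar U p) {i : ℤ} {s : ℕ} (hpos : 0 < p i s) :
    i < jL := by
  obtain ⟨-, -, -, -, -, -, -, hout, -⟩ := hp
  by_contra h
  exact hpos.ne' (hout i s (Or.inr (not_lt.1 h)))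

theorem le_of_qOf_pos (hp : PrimalFeasible j0 jL jstar U p) {i : ℤ} {n : ℕ} (hn : n ≠ 0)
    (hq : 0 < qOf jstar p i (n + 1)) : i ≤ jL := by
  have hsum := add_qOf_succ jstar p i hn
  have hpi := hp.2.1 i (n + 1)
  rcases (hp.2.1 (i - 1) n).lt_or_eq with h | h
  · linarith [hp.lt_of_pos h]
  · linarith [hp.lt_of_pos (show 0 < p (i + 1) n by linarith)]

end PrimalFeasible

section StoppingRule

variable {Ω : Type*} {mΩ : MeasurableSpace Ω} {P : Measure Ω}
  {Y : ℕ → Ω → ℤ} {τ : Ω → ℕ} {t s : ℕ} {p q : ℤ → ℕ → ℝ}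

/-- At a site `(i, s)` reached after time `t`, the walk stops with probability
`q i s / (p i s + q i s)`. -/
def IsRandomizedStoppingRule (P : Measure Ω) (Y : ℕ → Ω → ℤ) (τ : Ω → ℕ) (t : ℕ)
    (p q : ℤ → ℕ → ℝ) : Prop :=
  ∀ s : ℕ, t + 1 ≤ s → ∀ i : ℤ,
    P {ω | τ ω = s ∧ Y s ω = i} * ENNReal.ofReal (p i s + q i s) =
      P {ω | s ≤ τ ω ∧ Y s ω = i} * ENNReal.ofReal (q i s)

theorem measure_le_and_eq (hY : ∀ n, Measurable (Y n)) (hτ : Measurable τ) (s : ℕ) (i : ℤ) :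
    P {ω | s ≤ τ ω ∧ Y s ω = i} =
      P {ω | τ ω = s ∧ Y s ω = i} + P {ω | s < τ ω ∧ Y s ω = i} := by
  rw [← measure_union _ (measurableSet_lt_and_eq hY hτ s i)]
  · congr 1
    ext ω
    simp only [mem_union, mem_ofPred_eq]
    omega
  · rw [Set.disjoint_left]
    rintro ω ⟨h, -⟩ ⟨h', -⟩
    omega

namespace IsRandomizedStoppingRule

theorem ae_pos_of_continue [IsFiniteMeasure P] (hR : IsRandomizedStoppingRule P Y τ t p q)
    (hY : ∀ n, Measurable (Y n)) (hτ : Measurable τ) (hp : ∀ i s, 0 ≤ p i s) (hs : t + 1 ≤ s) :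
    ∀ᵐ ω ∂P, s < τ ω → 0 < p (Y s ω) s + q (Y s ω) s → 0 < p (Y s ω) s := by
  refine (ae_imp_iff_forall_measure_eq_zero (X := Y s)
    (Q := fun i => 0 < p i s + q i s → 0 < p i s)).2 fun i hi => ?_
  simp only [Classical.not_imp, not_lt] at hi
  obtain ⟨hpq, hpi⟩ := hi
  have hq : 0 < q i s := by linarith
  have hrule := hR s hs i
  rw [le_antisymm hpi (hp i s), zero_add, measure_le_and_eq hY hτ, add_mul] at hrule
  have hfin : P {ω | τ ω = s ∧ Y s ω = i} * ENNReal.ofReal (q i s) ≠ ⊤ :=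
    ENNReal.mul_ne_top (measure_ne_top P _) ENNReal.ofReal_ne_top
  have hzero := (ENNReal.add_right_inj hfin).1 ((add_zero _).trans hrule)
  exact ((mul_eq_zero.1 hzero.symm).resolve_right (ENNReal.ofReal_pos.2 hq).ne')

theorem ae_pos_of_stop (hR : IsRandomizedStoppingRule P Y τ t p q) (hs : t + 1 ≤ s) :
    ∀ᵐ ω ∂P, τ ω = s → 0 < p (Y s ω) s + q (Y s ω) s → 0 < q (Y s ω) s := by
  refine (ae_imp_iff_forall_measure_eq_zero (X := Y s)
    (Q := fun i => 0 < p i s + q i s → 0 < q i s)).2 fun i hi => ?_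
  simp only [Classical.not_imp, not_lt] at hi
  have hrule := hR s hs i
  rw [ENNReal.ofReal_of_nonpos hi.2, mul_zero] at hrule
  exact (mul_eq_zero.1 hrule).resolve_right (ENNReal.ofReal_pos.2 hi.1).ne'

end IsRandomizedStoppingRule

end StoppingRule

section Support

variable {Ω : Type*} {mΩ : MeasurableSpace Ω} {P : Measure Ω} [IsFiniteMeasure P]
  {Y : ℕ → Ω → ℤ} {τ : Ω → ℕ} {t : ℕ} {jstar : ℤ} {p : ℤ → ℕ → ℝ}

theorem ae_add_qOf_pos_succ (hW : IsStoppedSimpleRandomWalk P Y τ t)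
    (hY : ∀ n, Measurable (Y n)) (hτ : Measurable τ) (hp : ∀ i s, 0 ≤ p i s) {s : ℕ}
    (hs : t ≤ s) (hs0 : s ≠ 0)
    (hpos : ∀ᵐ ω ∂P, s < τ ω → 0 < p (Y s ω) s) :
    ∀ᵐ ω ∂P, s < τ ω → 0 < p (Y (s + 1) ω) (s + 1) + qOf jstar p (Y (s + 1) ω) (s + 1) := by
  filter_upwards [hW.ae_step hY hτ hs, hpos] with ω hstep hposω hlt
  rw [add_qOf_succ jstar p _ hs0]
  rcases hstep hlt with h | h <;> rw [h]
  · simp only [add_sub_cancel_right]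
    linarith [hposω hlt, hp (Y s ω + 1 + 1) s]
  · simp only [sub_add_cancel]
    linarith [hposω hlt, hp (Y s ω - 1 - 1) s]

variable (hW : IsStoppedSimpleRandomWalk P Y τ t)
  (hR : IsRandomizedStoppingRule P Y τ t p (qOf jstar p)) (hY : ∀ n, Measurable (Y n))
  (hτ : Measurable τ) (hp : ∀ i s, 0 ≤ p i s) (ht : t ≠ 0) {j : ℤ}
  (hstart : ∀ᵐ ω ∂P, Y t ω = j) (hpj : 0 < p j t)
include hW hR hY hτ hp ht hstart hpj

theorem ae_pos_before_stop : ∀ s, t ≤ s → ∀ᵐ ω ∂P, s < τ ω → 0 < p (Y s ω) s := by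
  intro s hs
  induction s, hs using Nat.le_induction with
  | base => filter_upwards [hstart] with ω hω _ using hω ▸ hpj
  | succ s hs ih =>
    filter_upwards [ae_add_qOf_pos_succ hW hY hτ hp hs (by omega) ih,
      hR.ae_pos_of_continue hY hτ hp (by omega : t + 1 ≤ s + 1)] with ω harrive hcontinue hlt
    exact hcontinue hlt (harrive (by omega))

theorem ae_qOf_pos_at_stop (hcont : ∀ᵐ ω ∂P, t + 1 ≤ τ ω) :
    ∀ᵐ ω ∂P, 0 < qOf jstar p (Y (τ ω) ω) (τ ω) := by
  have hstop : ∀ s, ∀ᵐ ω ∂P, τ ω = s + 1 → t ≤ s →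
      0 < qOf jstar p (Y (s + 1) ω) (s + 1) := by
    intro s
    by_cases hs : t ≤ s
    · filter_upwards [ae_add_qOf_pos_succ hW hY hτ hp hs (by omega)
        (ae_pos_before_stop hW hR hY hτ hp ht hstart hpj s hs),
        hR.ae_pos_of_stop (by omega : t + 1 ≤ s + 1)] with ω harrive hstopω hτω _
      exact hstopω hτω (harrive (by omega))
    · exact Eventually.of_forall fun _ _ h => absurd h hs
  filter_upwards [ae_all_iff.2 hstop, hcont] with ω hω hτω
  obtain ⟨s, hs⟩ : ∃ s, τ ω = s + 1 := ⟨τ ω - 1, by omega⟩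
  rw [hs]
  exact hω s hs (by omega)

end Support

theorem PrimalFeasible.ae_le_along_path {Ω : Type*} {mΩ : MeasurableSpace Ω} {P : Measure Ω}
    {Y : ℕ → Ω → ℤ} {τ : Ω → ℕ} {t : ℕ} {j0 jL jstar : ℤ} {U : ℤ → ℝ} {p : ℤ → ℕ → ℝ}
    (hfeas : PrimalFeasible j0 jL jstar U p) (ht : t ≠ 0) (hcont : ∀ᵐ ω ∂P, t + 1 ≤ τ ω)
    (hbefore : ∀ s, t ≤ s → ∀ᵐ ω ∂P, s < τ ω → 0 < p (Y s ω) s)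
    (hat : ∀ᵐ ω ∂P, 0 < qOf jstar p (Y (τ ω) ω) (τ ω)) :
    ∀ᵐ ω ∂P, ∀ n, t ≤ n → n ≤ τ ω → Y n ω ≤ jL := by
  filter_upwards [(ae_ball_iff (to_countable (Ici t))).2 hbefore, hat, hcont]
    with ω hbeforeω hatω hτω n hn hnτ
  rcases hnτ.lt_or_eq with hlt | rfl
  · exact (hfeas.lt_of_pos (hbeforeω n hn hlt)).le
  · obtain ⟨m, hm⟩ : ∃ m, τ ω = m + 1 := ⟨τ ω - 1, by omega⟩
    rw [hm] at hatω ⊢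
    exact hfeas.le_of_qOf_pos (by omega) hatω

theorem dual_optimizer_representation_general
    (N : ℕ) (β k : ℝ) (hβ : 0 < β) (hk : 0 < k)
    (j0 jL jstar : ℤ)
    (μN : ℤ → ℝ)
    (p : ℤ → ℕ → ℝ)
    (hfeas : PrimalFeasible j0 jL jstar (UN N jstar μN) p)
    (ν : ℤ → ℝ) (η : ℤ → ℕ → ℝ)
    (hdual : DualFeasible β k N ν η)
    (hCS : ComplementarySlack β k N j0 jL jstar (UN N jstar μN) p ν η)
    -- the site `(j,t)` lies in the support of the primal optimizer
    (j : ℤ) (t : ℕ) (hp : 0 < p j t)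
    -- a random walk started at site `j` at time `t`, stopped according to the
    -- randomized stopping rule determined by `(p, q)`
    {Ω : Type*} {mΩ : MeasurableSpace Ω} (P : Measure Ω) [IsProbabilityMeasure P]
    (Y : ℕ → Ω → ℤ) (τ : Ω → ℕ)
    (hYmeas : ∀ n, Measurable (Y n)) (hτmeas : Measurable τ)
    (hstart : ∀ᵐ ω ∂P, Y t ω = j)
    (hcont : ∀ᵐ ω ∂P, t + 1 ≤ τ ω)
    (hwalk : ∀ s : ℕ, t ≤ s → ∀ i : ℤ,
      P {ω | s < τ ω ∧ Y s ω = i ∧ Y (s + 1) ω = i + 1} =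
        P {ω | s < τ ω ∧ Y s ω = i} / 2 ∧
      P {ω | s < τ ω ∧ Y s ω = i ∧ Y (s + 1) ω = i - 1} =
        P {ω | s < τ ω ∧ Y s ω = i} / 2)
    (hstop : ∀ s : ℕ, t + 1 ≤ s → ∀ i : ℤ,
      P {ω | τ ω = s ∧ Y s ω = i} * ENNReal.ofReal (p i s + qOf jstar p i s) =
        P {ω | s ≤ τ ω ∧ Y s ω = i} * ENNReal.ofReal (qOf jstar p i s))
    (hτint : Integrable (fun ω => (τ ω : ℝ)) P) :
    η j t + FbarD β k N j t =
      ∫ ω, (FbarD β k N (Y (τ ω) ω) (τ ω) -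
        ∑ s ∈ Finset.Ico t (τ ω), ν (Y s ω)) ∂P := by
  obtain ⟨-, hp0, -, -, -, -, hpinit, -, -⟩ := id hfeas
  obtain ⟨hν0, hη0, ⟨Cη, hCη⟩, ⟨Cν, hCν⟩, -⟩ := hdual
  obtain ⟨hslack, hstopped, -⟩ := hCS
  have ht : t ≠ 0 := by
    rintro rfl
    exact hp.ne' (hpinit j)
  have hsupp := ae_pos_before_stop hwalk hstop hYmeas hτmeas hp0 ht hstart hp
  have hqstop := ae_qOf_pos_at_stop hwalk hstop hYmeas hτmeas hp0 ht hstart hp hcont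
  have hharm : ∀ n, t ≤ n → ∀ᵐ ω ∂P, n < τ ω →
      ((η (Y n ω + 1) (n + 1) + FbarD β k N (Y n ω + 1) (n + 1)) +
        (η (Y n ω - 1) (n + 1) + FbarD β k N (Y n ω - 1) (n + 1))) / 2 -
        (η (Y n ω) n + FbarD β k N (Y n ω) n) = ν (Y n ω) := fun n hn =>
    (hsupp n hn).mono fun ω hpos hlt => by linarith [hslack _ _ (hpos hlt)]
  have hbound : ∀ᵐ ω ∂P, ∀ n, t ≤ n → n ≤ τ ω →
      |η (Y n ω) n + FbarD β k N (Y n ω) n| ≤ Cη + Real.exp (β * jL / Real.sqrt N) := by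
    filter_upwards [hfeas.ae_le_along_path ht hcont hsupp hqstop] with ω hpath n hn hnτ
    rw [abs_of_nonneg (add_nonneg (hη0 _ _) (FbarD_nonneg _ _ _ _ _))]
    exact add_le_add (hCη _ _) (FbarD_le_exp hβ.le hk.le N (hpath n hn hnτ) n)
  have hν : ∀ i, |ν i| ≤ Cν := fun i => (abs_of_nonneg (hν0 i)).trans_le (hCν i)
  calc η j t + FbarD β k N j t = ∫ ω, (η (Y t ω) t + FbarD β k N (Y t ω) t) ∂P := by
        rw [integral_congr_ae (hstart.mono fun ω h => by rw [h]), integral_const, probReal_univ,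
          one_smul]
    _ = ∫ ω, walkGain Y t (fun i s => η i s + FbarD β k N i s) ν (τ ω) ω ∂P :=
        (integral_walkGain_stop (V := fun i s => η i s + FbarD β k N i s) hwalk hYmeas hτmeas
          (hcont.mono fun _ h => by omega) hτint hharm hbound hν).symm
    _ = _ := integral_congr_ae (hqstop.mono fun ω hq => by simp [walkGain, hstopped _ _ hq])

/-- For optimal primal-dual solutions of `(P^N, D^N)`
satisfying complementary slackness, and `η̃* = η* + F̄^N`, one has, at every
site `(j,t)` with `p*_{j,t} > 0`,
`η̃*_{j,t} = E^{(j,t)}[F̄^N_{Y_τ̄, τ̄} - ∑_{s=t}^{τ̄-1} ν*_{Y_s}]`,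
where the expectation is over the random walk started at site `j` at time `t`,
stopped by the randomized stopping time `τ̄` determined by `(p*, q*)`. -/
theorem dual_optimizer_representation
    (N : ℕ) (hN : 0 < N) (β k : ℝ) (hβ : 0 < β) (hk : 0 < k)
    (j0 jL jstar : ℤ) (hj : j0 < jstar - 1) (hj' : jstar + 1 < jL)
    (μN : ℤ → ℝ) (hμpos : ∀ i, 0 ≤ μN i)
    (hμsupp : ∀ i, i < j0 ∨ jL < i → μN i = 0)
    (hμmass : ∑' i : ℤ, μN i = 1)
    (p : ℤ → ℕ → ℝ)
    (hfeas : PrimalFeasible j0 jL jstar (UN N jstar μN) p)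
    (hopt : ∀ p' : ℤ → ℕ → ℝ, PrimalFeasible j0 jL jstar (UN N jstar μN) p' →
      PrimalObj β k N jstar p' ≤ PrimalObj β k N jstar p)
    (ν : ℤ → ℝ) (η : ℤ → ℕ → ℝ)
    (hdual : DualFeasible β k N ν η)
    (hdualopt : ∀ (ν' : ℤ → ℝ) (η' : ℤ → ℕ → ℝ), DualFeasible β k N ν' η' →
      (∑' j : ℤ, ν j * UN N jstar μN j) +
          (η (jstar + 1) 1 + η (jstar - 1) 1) / 2 +
          (FbarD β k N (jstar + 1) 1 + FbarD β k N (jstar - 1) 1) / 2 ≤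
        (∑' j : ℤ, ν' j * UN N jstar μN j) +
          (η' (jstar + 1) 1 + η' (jstar - 1) 1) / 2 +
          (FbarD β k N (jstar + 1) 1 + FbarD β k N (jstar - 1) 1) / 2)
    (hCS : ComplementarySlack β k N j0 jL jstar (UN N jstar μN) p ν η)
    -- the site `(j,t)` lies in the support of the primal optimizer
    (j : ℤ) (t : ℕ) (hp : 0 < p j t)
    -- a random walk started at site `j` at time `t`, stopped according to the
    -- randomized stopping rule determined by `(p, q)`
    {Ω : Type*} {mΩ : MeasurableSpace Ω} (P : Measure Ω) [IsProbabilityMeasure P]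
    (Y : ℕ → Ω → ℤ) (τ : Ω → ℕ)
    (hYmeas : ∀ n, Measurable (Y n)) (hτmeas : Measurable τ)
    (hstart : ∀ᵐ ω ∂P, Y t ω = j)
    (hcont : ∀ᵐ ω ∂P, t + 1 ≤ τ ω)
    (hwalk : ∀ s : ℕ, t ≤ s → ∀ i : ℤ,
      P {ω | s < τ ω ∧ Y s ω = i ∧ Y (s + 1) ω = i + 1} =
        P {ω | s < τ ω ∧ Y s ω = i} / 2 ∧
      P {ω | s < τ ω ∧ Y s ω = i ∧ Y (s + 1) ω = i - 1} =
        P {ω | s < τ ω ∧ Y s ω = i} / 2)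
    (hstop : ∀ s : ℕ, t + 1 ≤ s → ∀ i : ℤ,
      P {ω | τ ω = s ∧ Y s ω = i} * ENNReal.ofReal (p i s + qOf jstar p i s) =
        P {ω | s ≤ τ ω ∧ Y s ω = i} * ENNReal.ofReal (qOf jstar p i s))
    (hτint : Integrable (fun ω => (τ ω : ℝ)) P) :
    η j t + FbarD β k N j t =
      ∫ ω, (FbarD β k N (Y (τ ω) ω) (τ ω) -
        ∑ s ∈ Finset.Ico t (τ ω), ν (Y s ω)) ∂P :=
  dual_optimizer_representation_general N β k hβ hk j0 jL jstar μN p hfeas ν η hdual hCS j t hp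
    (mΩ := mΩ) P Y τ hYmeas hτmeas hstart hcont hwalk hstop hτint
end
end
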